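/- arXiv:0704.0417 — 8 statements merged into one kernel-verified Lean document; each statement's English description precedes it below -/
import Mathlib

section
/- The function V is stable: for every finitely supported ρ : ℤ → ℝ with ρ n ≥ 0 for all n, the double sum ∑_{m,n ∈ ℤ} ρ m * V (m - n) * ρ n is ≥ 0. -/
open Finset

/-- The potential `V` on `ℤ`: `V 0 = V 2 = V (-2) = 1`, `V 1 = V (-1) = -1`,
and `V n = 0` for `|n| ≥ 3`. -/
def V : ℤ → ℝ := fun n =>
  if n = 0 ∨ n = 2 ∨ n = -2 then 1
  else if n = 1 ∨ n = -1 then -1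
  else 0

/-- A pair potential `V : ℤ → ℝ` is stable if every nonnegative finitely supported
density has nonnegative energy. -/
def IsStable (V : ℤ → ℝ) : Prop :=
  ∀ ρ : ℤ → ℝ, (Function.support ρ).Finite → (∀ n, 0 ≤ ρ n) →
    0 ≤ ∑ᶠ m, ∑ᶠ n, ρ m * V (m - n) * ρ n

/-!
Unfolding `V`, the energy is `∑ₘ ρₘ (ρₘ₋₂ - ρₘ₋₁ + ρₘ - ρₘ₊₁ + ρₘ₊₂)`. For `ρ ≥ 0` each summand
dominates the increment `H (m + 1) - H m` of a finitely supported `H = energyFlux ρ`, so the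
energy is at least the telescoping sum `∑ₘ (H (m + 1) - H m) = 0`. The products of neighbouring
values telescope into the first three terms of `H`; what is left is the three-point inequality
`max (z - y) 0 ^ 2 - max (y - x) 0 ^ 2 ≤ z (z - 2y + 2x)` at `(x, y, z) = (ρₘ₋₂, ρₘ₋₁, ρₘ)`,
whose left side is the increment of the last term of `H`.
-/

open Function

theorem finsum_nonneg_of_add_sub_le {α M : Type*} [AddGroup α] [AddCommGroup M] [PartialOrder M]
    [IsOrderedAddMonoid M] {f H : α → M} (a : α) (hf : HasFiniteSupport f)
    (hH : HasFiniteSupport H) (h : ∀ x, H (x + a) - H x ≤ f x) : 0 ≤ ∑ᶠ x, f x :=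
  calc 0 = ∑ᶠ x, (H (x + a) - H x) := by
        rw [finsum_sub_distrib (hH.fun_comp_of_injective (add_left_injective a)) hH,
          show ∑ᶠ x, H (x + a) = ∑ᶠ x, H x from finsum_comp_equiv (Equiv.addRight a), sub_self]
    _ ≤ ∑ᶠ x, f x :=
        finsum_le_finsum' ((hH.fun_comp_of_injective (add_left_injective a)).fun_sub hH) hf h

theorem max_sub_zero_sq_le {x y z : ℝ} (hx : 0 ≤ x) (hy : 0 ≤ y) (hz : 0 ≤ z) :
    max (z - y) 0 ^ 2 ≤ max (y - x) 0 ^ 2 + z * (z - 2 * y + 2 * x) := by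
  rcases le_total z y with hzy | hyz <;> rcases le_total y x with hyx | hxy
  · rw [max_eq_right (by linarith), max_eq_right (by linarith)]
    nlinarith [mul_nonneg hz hz, mul_nonneg hz (sub_nonneg.2 hyx)]
  · rw [max_eq_right (by linarith), max_eq_left (by linarith)]
    nlinarith [sq_nonneg (y - x - z)]
  · rw [max_eq_left (by linarith), max_eq_right (by linarith)]
    nlinarith [mul_le_mul hyz hyx hy hz]
  · rw [max_eq_left (by linarith), max_eq_left (by linarith)]
    nlinarith [mul_nonneg hx (by linarith : 0 ≤ x + 2 * (z - y))]

theorem support_V_subset : support V ⊆ ↑({-2, -1, 0, 1, 2} : Finset ℤ) := by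
  intro k hk
  contrapose! hk
  simp only [Finset.coe_insert, Finset.coe_singleton, Set.mem_insert_iff,
    Set.mem_singleton_iff] at hk
  rw [notMem_support, V, if_neg (by omega), if_neg (by omega)]

theorem finsum_V_mul (f : ℤ → ℝ) (m : ℤ) :
    ∑ᶠ n, V (m - n) * f n = f (m - 2) - f (m - 1) + f m - f (m + 1) + f (m + 2) := by
  rw [← finsum_comp_equiv (Equiv.subLeft m)]
  simp only [Equiv.subLeft_apply, sub_sub_cancel]
  rw [finsum_eq_sum_of_support_subset _ ((support_mul_subset_left _ _).trans support_V_subset)]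
  norm_num [V, sub_neg_eq_add]
  ring

theorem finsum_finsum_mul_V_mul (ρ : ℤ → ℝ) :
    ∑ᶠ m, ∑ᶠ n, ρ m * V (m - n) * ρ n =
      ∑ᶠ m, ρ m * (ρ (m - 2) - ρ (m - 1) + ρ m - ρ (m + 1) + ρ (m + 2)) := by
  simp_rw [mul_assoc, ← mul_finsum, finsum_V_mul]

def energyFlux (ρ : ℤ → ℝ) (m : ℤ) : ℝ :=
  ρ (m - 1) * ρ (m + 1) + ρ (m - 2) * ρ m - ρ (m - 1) * ρ m + max (ρ (m - 1) - ρ (m - 2)) 0 ^ 2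

theorem energyFlux_hasFiniteSupport {ρ : ℤ → ℝ} (hρ : HasFiniteSupport ρ) :
    HasFiniteSupport (energyFlux ρ) := by
  unfold energyFlux
  fun_prop (disch := first | exact sub_left_injective | exact add_left_injective _ | norm_num)

theorem energyFlux_add_one_sub_le {ρ : ℤ → ℝ} (hρ : ∀ n, 0 ≤ ρ n) (m : ℤ) :
    energyFlux ρ (m + 1) - energyFlux ρ m ≤
      ρ m * (ρ (m - 2) - ρ (m - 1) + ρ m - ρ (m + 1) + ρ (m + 2)) := by
  have := max_sub_zero_sq_le (hρ (m - 2)) (hρ (m - 1)) (hρ m)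
  simp only [energyFlux, add_sub_cancel_right, show m + 1 - 2 = m - 1 by ring,
    show m + 1 + 1 = m + 2 by ring]
  linarith

theorem V_isStable : IsStable V := by
  intro ρ hρ hρ_nonneg
  rw [finsum_finsum_mul_V_mul]
  exact finsum_nonneg_of_add_sub_le 1 (HasFiniteSupport.mul_left hρ _)
    (energyFlux_hasFiniteSupport hρ) (energyFlux_add_one_sub_le hρ_nonneg)
end

section
/- The function V is not the sum of a nonnegative function and a positive definite function: there do not exist f, g : ℤ → ℝ such that f n ≥ 0 for all n, g is positive definite, and V = f + g. -/
/-!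
If `V = f + g` with `f ≥ 0` and `g` positive definite, then `g ≤ V` pointwise. Take the
coefficients `c = (1, -1, 3, 3, 1)` at the points `(0, 1, 3, 4, 5)`: their autocorrelation
`h(n) = ∑_{xᵢ - xⱼ = n} cᵢ cⱼ` is nonnegative, equal to `21, 11, 2, 1` at `n = 0, ±1, ±4, ±5`
and zero elsewhere. Hence the quadratic form of `g` at `c`, which is `∑ₙ h(n) g(n) ≥ 0`, is at most
`∑ₙ h(n) V(n) = 21 - 22 = -1`.
-/

open Finset
open scoped ComplexOrder

/-- A real-valued function on an additive abelian group is positive definite if all its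
"quadratic forms" with complex coefficients are real and nonnegative. -/
def IsPosDef {G : Type*} [AddCommGroup G] (g : G → ℝ) : Prop :=
  ∀ (N : ℕ) (x : Fin N → G) (c : Fin N → ℂ),
    0 ≤ ∑ i, ∑ j, c i * (starRingEnd ℂ) (c j) * (g (x i - x j) : ℂ)

def quadForm {G : Type*} [AddCommGroup G] {N : ℕ} (g : G → ℝ) (x : Fin N → G) (c : Fin N → ℝ) :
    ℝ :=
  ∑ i, ∑ j, c i * c j * g (x i - x j)

theorem IsPosDef.quadForm_nonneg {G : Type*} [AddCommGroup G] {g : G → ℝ} (hg : IsPosDef g)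
    {N : ℕ} (x : Fin N → G) (c : Fin N → ℝ) : 0 ≤ quadForm g x c := by
  have h := hg N x (fun i => (c i : ℂ))
  simp only [Complex.conj_ofReal, ← Complex.ofReal_mul, ← Complex.ofReal_sum] at h
  exact_mod_cast h

theorem quadForm_certificate (g : ℤ → ℝ) :
    quadForm g ![0, 1, 3, 4, 5] ![1, -1, 3, 3, 1] =
      21 * g 0 + 11 * (g 1 + g (-1)) + 2 * (g 4 + g (-4)) + (g 5 + g (-5)) := by
  simp [quadForm, Fin.sum_univ_five]
  ring

theorem not_isPosDef_of_le_V {g : ℤ → ℝ} (hle : ∀ n, g n ≤ V n) : ¬ IsPosDef g := by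
  intro hg
  have hpos := hg.quadForm_nonneg ![0, 1, 3, 4, 5] ![1, -1, 3, 3, 1]
  rw [quadForm_certificate] at hpos
  have h0 : g 0 ≤ 1 := by simpa [V] using hle 0
  have h1 : g 1 ≤ -1 := by simpa [V] using hle 1
  have h1' : g (-1) ≤ -1 := by simpa [V] using hle (-1)
  have h4 : g 4 ≤ 0 := by simpa [V] using hle 4
  have h4' : g (-4) ≤ 0 := by simpa [V] using hle (-4)
  have h5 : g 5 ≤ 0 := by simpa [V] using hle 5
  have h5' : g (-5) ≤ 0 := by simpa [V] using hle (-5)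
  linarith

theorem V_not_decomposable :
    ¬ ∃ f g : ℤ → ℝ, (∀ n, 0 ≤ f n) ∧ IsPosDef g ∧ V = f + g := by
  rintro ⟨f, g, hf, hg, hV⟩
  refine not_isPosDef_of_le_V (fun n => ?_) hg
  simpa [hV] using hf n
end

section
/- Cutting the chain lowers the energy: let ρ : ℤ → ℝ be finitely supported with ρ m ≥ 0 for all m, let n ∈ ℤ, and define ρ_L m = ρ m for m ≤ n+1 and ρ_L m = 0 for m ≥ n+2, and ρ_R = ρ - ρ_L. Then Q(ρ) - Q(ρ_L) - Q(ρ_R) = 2*(ρ n - ρ (n+1))*ρ (n+2) + 2*ρ (n+1)*ρ (n+3); in particular, if ρ n ≥ ρ (n+1) then Q(ρ) ≥ Q(ρ_L) + Q(ρ_R). -/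
/-!
Write `Q ρ = B(ρ, ρ)` for the bilinear form `B(ρ, σ) = ∑ ρ m V(m - k) σ k`, which is symmetric
because `V` is even. Then `Q(ρ_L + ρ_R) = Q ρ_L + Q ρ_R + 2 B(ρ_L, ρ_R)`. Since `ρ_L` lives on
`m ≤ n + 1`, `ρ_R` on `k ≥ n + 2` and `V` has range `2`, only the pairs `(n, n+2)`, `(n+1, n+2)`,
`(n+1, n+3)` contribute to `B(ρ_L, ρ_R)`, with weights `V (-2) = 1`, `V (-1) = -1`, `V (-2) = 1`.
-/

open Finset

/-- The energy of a density `ρ` with the potential `V`. -/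
noncomputable def Q (ρ : ℤ → ℝ) : ℝ := ∑ᶠ m, ∑ᶠ n, ρ m * V (m - n) * ρ n

lemma V_neg (x : ℤ) : V (-x) = V x := by
  unfold V
  split_ifs <;> first | rfl | omega

lemma V_eq_zero_of_three_le_abs {x : ℤ} (h : 3 ≤ |x|) : V x = 0 := by
  rw [le_abs'] at h
  unfold V
  split_ifs <;> first | rfl | omega

lemma V_neg_one : V (-1) = -1 := by norm_num [V]

lemma V_neg_two : V (-2) = 1 := by norm_num [V]

noncomputable def energyForm (ρ σ : ℤ → ℝ) : ℝ := ∑ᶠ m, ∑ᶠ k, ρ m * V (m - k) * σ k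

lemma Q_eq_energyForm (ρ : ℤ → ℝ) : Q ρ = energyForm ρ ρ := rfl

section energyForm

variable {ρ σ : ℤ → ℝ} {s : Finset ℤ}

lemma energyForm_eq_sum (hρ : Function.support ρ ⊆ s) (hσ : Function.support σ ⊆ s) :
    energyForm ρ σ = ∑ m ∈ s, ∑ k ∈ s, ρ m * V (m - k) * σ k := by
  rw [energyForm, finsum_eq_sum_of_support_subset]
  · refine sum_congr rfl fun m _ => finsum_eq_sum_of_support_subset _ ?_
    exact (Function.support_mul_subset_right _ _).trans hσ
  · refine Function.support_subset_iff'.2 fun m hm => ?_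
    simp [Function.notMem_support.1 fun h => hm (hρ h)]

lemma energyForm_comm (hρ : (Function.support ρ).Finite) (hσ : (Function.support σ).Finite) :
    energyForm σ ρ = energyForm ρ σ := by
  have hρs : Function.support ρ ⊆ (hρ.toFinset ∪ hσ.toFinset : Finset ℤ) := by simp
  have hσs : Function.support σ ⊆ (hρ.toFinset ∪ hσ.toFinset : Finset ℤ) := by simp
  rw [energyForm_eq_sum hσs hρs, energyForm_eq_sum hρs hσs, sum_comm]
  refine sum_congr rfl fun m _ => sum_congr rfl fun k _ => ?_
  rw [← V_neg, neg_sub]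
  ring

lemma Q_add (hρ : (Function.support ρ).Finite) (hσ : (Function.support σ).Finite) :
    Q (ρ + σ) = Q ρ + Q σ + 2 * energyForm ρ σ := by
  set s : Finset ℤ := hρ.toFinset ∪ hσ.toFinset
  have hρs : Function.support ρ ⊆ s := by simp [s]
  have hσs : Function.support σ ⊆ s := by simp [s]
  have hs : Function.support (ρ + σ) ⊆ s :=
    (Function.support_add _ _).trans (Set.union_subset hρs hσs)
  have hcomm := energyForm_comm hρ hσ
  rw [energyForm_eq_sum hσs hρs, energyForm_eq_sum hρs hσs] at hcomm
  simp only [Q_eq_energyForm]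
  rw [energyForm_eq_sum hs hs, energyForm_eq_sum hρs hρs, energyForm_eq_sum hσs hσs,
    energyForm_eq_sum hρs hσs]
  simp only [Pi.add_apply, add_mul, mul_add, sum_add_distrib]
  linarith

lemma energyForm_of_cut {n : ℤ} (hρ : (Function.support ρ).Finite)
    (hσ : (Function.support σ).Finite) (hρn : ∀ m, n + 1 < m → ρ m = 0)
    (hσn : ∀ k, k ≤ n + 1 → σ k = 0) :
    energyForm ρ σ = ρ n * σ (n + 2) - ρ (n + 1) * σ (n + 2) + ρ (n + 1) * σ (n + 3) := by
  set T : Finset (ℤ × ℤ) := {(n, n + 2), (n + 1, n + 2), (n + 1, n + 3)}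
  set s : Finset ℤ := hρ.toFinset ∪ hσ.toFinset ∪ {n, n + 1, n + 2, n + 3}
  have hρs : Function.support ρ ⊆ s := fun m hm => by simp [s, hm]
  have hσs : Function.support σ ⊆ s := fun k hk => by simp [s, hk]
  have hT : T ⊆ s ×ˢ s := by
    intro p hp
    simp only [T, mem_insert, mem_singleton] at hp
    rcases hp with rfl | rfl | rfl <;> simp [s]
  rw [energyForm_eq_sum hρs hσs, ← sum_product', ← sum_subset hT]
  · simp only [T]
    rw [sum_insert (by simp), sum_pair (by simp)]
    simp only [sub_add_cancel_left, add_sub_add_left_eq_sub, Int.reduceSub, V_neg_two, V_neg_one]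
    ring
  · rintro ⟨m, k⟩ - hmk
    simp only [T, mem_insert, mem_singleton, Prod.mk.injEq, not_or, not_and] at hmk
    rcases lt_or_ge (n + 1) m with hm | hm
    · simp [hρn m hm]
    rcases le_or_gt k (n + 1) with hk | hk
    · simp [hσn k hk]
    rw [V_eq_zero_of_three_le_abs (le_abs.2 (.inr (by omega))), mul_zero, zero_mul]

end energyForm

theorem cutting_the_chain (ρ : ℤ → ℝ) (hfin : (Function.support ρ).Finite)
    (hρ : ∀ m, 0 ≤ ρ m) (n : ℤ)
    (ρL : ℤ → ℝ) (hρL : ρL = fun m => if m ≤ n + 1 then ρ m else 0)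
    (ρR : ℤ → ℝ) (hρR : ρR = ρ - ρL) :
    Q ρ - Q ρL - Q ρR
      = 2 * (ρ n - ρ (n + 1)) * ρ (n + 2) + 2 * ρ (n + 1) * ρ (n + 3) ∧
    (ρ (n + 1) ≤ ρ n → Q ρL + Q ρR ≤ Q ρ) := by
  have hLfin : (Function.support ρL).Finite :=
    hfin.subset <| Function.support_subset_iff'.2 fun m hm => by
      simp [hρL, Function.notMem_support.1 hm]
  have hRfin : (Function.support ρR).Finite :=
    hfin.subset <| Function.support_subset_iff'.2 fun m hm => by
      simp [hρR, hρL, Function.notMem_support.1 hm]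
  have hcut := energyForm_of_cut (n := n) hLfin hRfin
    (fun m hm => by simp [hρL, not_le.2 hm]) (fun k hk => by simp [hρR, hρL, hk])
  have hQ : Q ρ = Q ρL + Q ρR + 2 * energyForm ρL ρR := by
    rw [show ρ = ρL + ρR by rw [hρR, add_sub_cancel]]
    exact Q_add hLfin hRfin
  have hL : ∀ m, m ≤ n + 1 → ρL m = ρ m := fun m hm => by simp [hρL, hm]
  have hR : ∀ k, n + 1 < k → ρR k = ρ k := fun k hk => by simp [hρR, hρL, not_le.2 hk]
  have hgap : Q ρ - Q ρL - Q ρR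
      = 2 * (ρ n - ρ (n + 1)) * ρ (n + 2) + 2 * ρ (n + 1) * ρ (n + 3) := by
    rw [hQ, hcut, hL n (by omega), hL (n + 1) le_rfl, hR (n + 2) (by omega), hR (n + 3) (by omega)]
    ring
  refine ⟨hgap, fun hle => ?_⟩
  have := mul_nonneg (sub_nonneg.2 hle) (hρ (n + 2))
  have := mul_nonneg (hρ (n + 1)) (hρ (n + 3))
  linarith
end

section
/- The 5-periodic function μ is positive definite on ℤ. -/
open Finset
open scoped ComplexOrder

/-- The 5-periodic function `μ` on `ℤ`: `μ n = 1` if `n ≡ 0 [ZMOD 5]`,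
`μ n = (√5 - 1)/2` if `n ≡ ±1 [ZMOD 5]`, and `μ n = 0` if `n ≡ ±2 [ZMOD 5]`. -/
noncomputable def μ : ℤ → ℝ := fun n =>
  if (n : ZMod 5) = 0 then 1
  else if (n : ZMod 5) = 1 ∨ (n : ZMod 5) = -1 then (Real.sqrt 5 - 1) / 2
  else 0

/-!
On `ZMod 5`, with `ψ j = exp (2πij/5)`, one has `μ = 1/√5 + ((5 - √5)/10) (ψ + ψ⁻¹)` (the Fourier
expansion of `μ`, read off from `cos (2π/5) = (√5 - 1)/4` and `cos (4π/5) = -(1 + √5)/4`).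
A unitary character `χ` turns the quadratic form into `|∑ cᵢ χ(xᵢ)|² ≥ 0`, so the nonnegative
combination `μ` of characters is positive definite on `ZMod 5`, hence on `ℤ` by pulling back
along `ℤ → ZMod 5`.
-/

open ComplexConjugate

theorem IsPosDef.comp_addMonoidHom {G H : Type*} [AddCommGroup G] [AddCommGroup H] {g : H → ℝ}
    (hg : IsPosDef g) (f : G →+ H) : IsPosDef (g ∘ f) := by
  intro N x c
  simpa [map_sub] using hg N (f ∘ x) c

theorem Complex.sum_sum_mul_conj_eq_normSq {ι : Type*} (s : Finset ι) (v : ι → ℂ) :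
    ∑ i ∈ s, ∑ j ∈ s, v i * conj (v j) = Complex.normSq (∑ i ∈ s, v i) := by
  rw [← Complex.mul_conj, map_sum, sum_mul_sum]

theorem AddChar.coe_map_sub_eq_mul_conj {G : Type*} [AddCommGroup G] (ψ : AddChar G Circle)
    (a b : G) : (ψ (a - b) : ℂ) = ψ a * conj (ψ b : ℂ) := by
  rw [AddChar.map_sub_eq_div, Circle.coe_div, ← Circle.coe_inv_eq_conj, Circle.coe_inv,
    div_eq_mul_inv]

theorem isPosDef_of_eq_sum_addChar {G ι : Type*} [AddCommGroup G] [Fintype ι] {g : G → ℝ}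
    (ψ : ι → AddChar G Circle) (a : ι → ℝ) (ha : ∀ k, 0 ≤ a k)
    (hg : ∀ x, (g x : ℂ) = ∑ k, a k * (ψ k x : ℂ)) : IsPosDef g := by
  intro N x c
  have hform : ∑ i, ∑ j, c i * conj (c j) * (g (x i - x j) : ℂ)
      = ∑ k, a k * (Complex.normSq (∑ i, c i * (ψ k (x i) : ℂ)) : ℂ) := by
    simp only [hg, AddChar.coe_map_sub_eq_mul_conj, ← Complex.sum_sum_mul_conj_eq_normSq, mul_sum,
      map_mul]
    rw [sum_comm_cycle]
    exact sum_congr rfl fun k _ => sum_congr rfl fun i _ => sum_congr rfl fun j _ => by ring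
  rw [hform]
  exact sum_nonneg fun k _ =>
    mul_nonneg (by exact_mod_cast ha k) (by exact_mod_cast Complex.normSq_nonneg _)

namespace Real

theorem cos_two_pi_div_five : cos (2 * π / 5) = (√5 - 1) / 4 := by
  rw [show 2 * π / 5 = 2 * (π / 5) by ring, cos_two_mul, cos_pi_div_five]
  linarith [sq_sqrt (show (0 : ℝ) ≤ 5 by norm_num)]

theorem cos_four_pi_div_five : cos (4 * π / 5) = -(1 + √5) / 4 := by
  rw [show 4 * π / 5 = π - π / 5 by ring, cos_pi_sub, cos_pi_div_five, neg_div]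

end Real

open Real

theorem ZMod.coe_toCircle_add_coe_toCircle_neg {N : ℕ} [NeZero N] (j : ZMod N) :
    (toCircle j : ℂ) + toCircle (-j) = (2 * Real.cos (2 * π * (j.val / N)) : ℝ) := by
  rw [AddChar.map_neg_eq_inv, Circle.coe_inv_eq_conj, Complex.add_conj, toCircle_eq_circleExp,
    Circle.coe_exp, Complex.exp_ofReal_mul_I_re]

noncomputable def muMod5 (j : ZMod 5) : ℝ :=
  if j = 0 then 1 else if j = 1 ∨ j = -1 then (√5 - 1) / 2 else 0

theorem mu_eq_muMod5_comp : μ = muMod5 ∘ Int.castAddHom (ZMod 5) := rfl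

theorem muMod5_eq_cos (j : ZMod 5) :
    muMod5 j = √5 / 5 + (5 - √5) / 10 * (2 * Real.cos (2 * π * (j.val / 5))) := by
  have h5 : √5 ^ 2 = 5 := sq_sqrt (by norm_num)
  obtain rfl | rfl | rfl | rfl | rfl : j = 0 ∨ j = 1 ∨ j = 2 ∨ j = 3 ∨ j = 4 := by
    revert j; decide
  · rw [muMod5, if_pos rfl, ZMod.val_zero, Nat.cast_zero, zero_div, mul_zero, cos_zero]
    linarith
  · rw [muMod5, if_neg (by decide), if_pos (by decide), ZMod.val_one'' (by norm_num),
      Nat.cast_one, show 2 * π * (1 / 5) = 2 * π / 5 by ring, cos_two_pi_div_five]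
    linarith
  · rw [muMod5, if_neg (by decide), if_neg (by decide), ZMod.val_ofNat_of_lt (by norm_num),
      Nat.cast_ofNat, show 2 * π * (2 / 5) = 4 * π / 5 by ring, cos_four_pi_div_five]
    linarith
  · rw [muMod5, if_neg (by decide), if_neg (by decide), ZMod.val_ofNat_of_lt (by norm_num),
      Nat.cast_ofNat, show 2 * π * (3 / 5) = 2 * π - 4 * π / 5 by ring, cos_two_pi_sub,
      cos_four_pi_div_five]
    linarith
  · rw [muMod5, if_neg (by decide), if_pos (by decide), ZMod.val_ofNat_of_lt (by norm_num),
      Nat.cast_ofNat, show 2 * π * (4 / 5) = 2 * π - 2 * π / 5 by ring, cos_two_pi_sub,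
      cos_two_pi_div_five]
    linarith

theorem muMod5_eq_sum_addChar (j : ZMod 5) :
    (muMod5 j : ℂ) = ∑ k, (![√5 / 5, (5 - √5) / 10, (5 - √5) / 10] k : ℝ) *
      ((![1, ZMod.toCircle, ZMod.toCircle⁻¹] k : AddChar (ZMod 5) Circle) j : ℂ) := by
  simp only [Fin.sum_univ_three, Matrix.cons_val_zero, Matrix.cons_val_one, Matrix.cons_val_two,
    Matrix.head_cons, Matrix.tail_cons, AddChar.one_apply, AddChar.inv_apply, Circle.coe_one]
  rw [mul_one, add_assoc, ← mul_add, ZMod.coe_toCircle_add_coe_toCircle_neg, muMod5_eq_cos]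
  push_cast
  ring

theorem muMod5_isPosDef : IsPosDef muMod5 := by
  have h₀ : 0 ≤ √5 / 5 := by positivity
  have h₁ : 0 ≤ (5 - √5) / 10 := by linarith [show √5 ≤ 5 by simp]
  refine isPosDef_of_eq_sum_addChar _ _ (fun k => ?_) muMod5_eq_sum_addChar
  fin_cases k
  exacts [h₀, h₁, h₁]

theorem mu_isPosDef : IsPosDef μ :=
  mu_eq_muMod5_comp ▸ muMod5_isPosDef.comp_addMonoidHom _
end

section
/- The function W is stable: for every finite Borel measure ρ on ℝ, the double integral ∫∫ W (x - y) dρ(x) dρ(y) is ≥ 0. -/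
/-!
With `φ t = ∫ f (t - x) dρ(x)`, Fubini turns the energy into `∑ₙ V n ∫ φ(t) φ(t - n) dt`,
which (`V` being even, and by translation invariance) equals
`∫ φ(t) (φ(t) - 2 φ(t-1) + 2 φ(t-2)) dt`. For `a, p, r ≥ 0` one has
`a (a - 2p + 2r) ≥ (a - p)₊² - (p - r)₊²`, so this integrand dominates `Ψ(t) - Ψ(t - 1)` with
`Ψ(t) = (φ(t) - φ(t-1))₊²`, whose integral vanishes.
-/

open Finset MeasureTheory

theorem V_eq_zero_of_notMem {n : ℤ} (hn : n ∉ ({-2, -1, 0, 1, 2} : Finset ℤ)) : V n = 0 := by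
  simp_all [V]

theorem sum_V_mul (a : ℤ → ℝ) :
    ∑ n ∈ {-2, -1, 0, 1, 2}, V n * a n = a (-2) - a (-1) + a 0 - a 1 + a 2 := by
  simp [V, sub_eq_add_neg, add_assoc]

noncomputable def autocorrelation (f : ℝ → ℝ) (u : ℝ) : ℝ := ∫ s, f (u + s) * f s

theorem autocorrelation_sub_sub (f : ℝ → ℝ) (c x y : ℝ) :
    autocorrelation f (c - (x - y)) = ∫ t, f (t - x) * f (t - c - y) := by
  rw [autocorrelation, ← integral_sub_right_eq_self _ (c + y)]
  congr 1 with t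
  ring_nf

section CompactSupport

variable {f : ℝ → ℝ} (μ ν : Measure ℝ) [IsFiniteMeasure μ] [IsFiniteMeasure ν]

theorem integrable_comp_sub_mul_comp_sub (hf : Continuous f) (hfc : HasCompactSupport f)
    (c : ℝ) :
    Integrable (fun q : (ℝ × ℝ) × ℝ => f (q.2 - q.1.1) * f (q.2 - c - q.1.2))
      ((μ.prod ν).prod volume) := by
  obtain ⟨C, hC⟩ := hf.bounded_above_of_compact_support hfc
  have hfi : Integrable f := hf.integrable_of_hasCompactSupport hfc
  have hleft :
      Integrable (fun q : (ℝ × ℝ) × ℝ => f (q.2 - q.1.1)) ((μ.prod ν).prod volume) := by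
    rw [integrable_prod_iff (by fun_prop : Continuous _).aestronglyMeasurable]
    refine ⟨ae_of_all _ fun p => hfi.comp_sub_right p.1, ?_⟩
    simp only [integral_sub_right_eq_self fun t => ‖f t‖]
    exact integrable_const _
  exact hleft.mul_bdd (by fun_prop : Continuous _).aestronglyMeasurable
    (ae_of_all _ fun _ => hC _)

theorem integrable_autocorrelation_sub_sub (hf : Continuous f) (hfc : HasCompactSupport f)
    (c : ℝ) : Integrable (fun p : ℝ × ℝ => autocorrelation f (c - (p.1 - p.2))) (μ.prod ν) := by
  simp only [autocorrelation_sub_sub]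
  exact (integrable_comp_sub_mul_comp_sub μ ν hf hfc c).integral_prod_left

theorem integral_autocorrelation_sub_sub (hf : Continuous f) (hfc : HasCompactSupport f)
    (c : ℝ) :
    ∫ p, autocorrelation f (c - (p.1 - p.2)) ∂(μ.prod ν) =
      ∫ t, (∫ x, f (t - x) ∂μ) * ∫ y, f (t - c - y) ∂ν := by
  simp only [autocorrelation_sub_sub]
  rw [integral_integral_swap (integrable_comp_sub_mul_comp_sub μ ν hf hfc c)]
  congr 1 with t
  exact integral_prod_mul (fun x => f (t - x)) (fun y => f (t - c - y))

theorem integral_integral_sum_autocorrelation (hf : Continuous f) (hfc : HasCompactSupport f)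
    {ι : Type*} (s : Finset ι) (a c : ι → ℝ) :
    ∫ x, ∫ y, ∑ i ∈ s, a i * autocorrelation f (c i - (x - y)) ∂ν ∂μ =
      ∑ i ∈ s, a i * ∫ t, (∫ x, f (t - x) ∂μ) * ∫ y, f (t - c i - y) ∂ν := by
  have hint (i : ι) := (integrable_autocorrelation_sub_sub μ ν hf hfc (c i)).const_mul (a i)
  rw [← integral_prod _ (integrable_finsetSum _ fun i _ => hint i),
    integral_finsetSum _ fun i _ => hint i]
  simp only [integral_const_mul, integral_autocorrelation_sub_sub μ ν hf hfc]

theorem memLp_two_integral_comp_sub (hf : Continuous f) (hfc : HasCompactSupport f) :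
    MemLp (fun t => ∫ x, f (t - x) ∂μ) 2 := by
  obtain ⟨C, hC⟩ := hf.bounded_above_of_compact_support hfc
  have hfi : Integrable f := hf.integrable_of_hasCompactSupport hfc
  have hint : Integrable (fun t => ∫ x, f (t - x) ∂μ) := by
    have hprod : Integrable (fun p : ℝ × ℝ => f (p.1 - p.2)) (volume.prod μ) := by
      rw [integrable_prod_iff' (by fun_prop : Continuous _).aestronglyMeasurable]
      refine ⟨ae_of_all _ fun x => hfi.comp_sub_right x, ?_⟩
      simp only [integral_sub_right_eq_self fun t => ‖f t‖]
      exact integrable_const _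
    exact hprod.integral_prod_left
  refine (memLp_two_iff_integrable_sq hint.1).2 ?_
  simp only [sq]
  exact hint.bdd_mul hint.1 (ae_of_all _ fun t => norm_integral_le_of_norm_le_const (C := C)
    (ae_of_all _ fun x => hC _))

end CompactSupport

theorem max_sub_zero_sq_sub_max_sub_zero_sq_le {a p r : ℝ} (ha : 0 ≤ a) (hp : 0 ≤ p)
    (hr : 0 ≤ r) : max (a - p) 0 ^ 2 - max (p - r) 0 ^ 2 ≤ a * (a - 2 * p + 2 * r) := by
  rcases le_total a p with hap | hap <;> rcases le_total p r with hpr | hpr <;>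
    simp only [max_eq_left, max_eq_right, sub_nonneg, sub_nonpos, *] <;>
    nlinarith [sq_nonneg (a - (p - r))]

theorem two_mul_integral_mul_comp_sub_one_le {φ : ℝ → ℝ} (h0 : ∀ t, 0 ≤ φ t)
    (hφ : MemLp φ 2) :
    2 * ∫ t, φ t * φ (t - 1) ≤ (∫ t, φ t * φ t) + 2 * ∫ t, φ t * φ (t - 2) := by
  have hshift (c : ℝ) : MemLp (fun t => φ (t - c)) 2 :=
    hφ.comp_measurePreserving (measurePreserving_sub_right volume c)
  have hint (c : ℝ) : Integrable (fun t => φ t * φ (t - c)) := hφ.integrable_mul (hshift c)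
  have hsq : Integrable (fun t => φ t * φ t) := hφ.integrable_mul hφ
  set Ψ : ℝ → ℝ := fun t => max (φ t - φ (t - 1)) 0 ^ 2 with hΨ_def
  have hΨ : Integrable Ψ := by
    refine hsq.mono' ?_ (ae_of_all _ fun t => ?_)
    · exact ((hφ.1.sub (hshift 1).1).sup aestronglyMeasurable_const).pow 2
    · rw [Real.norm_eq_abs, abs_of_nonneg (by positivity), ← sq]
      exact pow_le_pow_left₀ (le_max_right _ _) (max_le (by linarith [h0 (t - 1)]) (h0 t)) 2
  have hΨ_telescope : ∫ t, (Ψ t - Ψ (t - 1)) = 0 := by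
    rw [integral_sub hΨ (hΨ.comp_sub_right 1), integral_sub_right_eq_self, sub_self]
  have hsub : Integrable (fun t => φ t * φ t - 2 * (φ t * φ (t - 1))) :=
    hsq.sub ((hint 1).const_mul 2)
  have hle : ∫ t, (Ψ t - Ψ (t - 1)) ≤
      ∫ t, (φ t * φ t - 2 * (φ t * φ (t - 1)) + 2 * (φ t * φ (t - 2))) := by
    refine integral_mono (hΨ.sub (hΨ.comp_sub_right 1)) (hsub.add ((hint 2).const_mul 2))
      fun t => ?_
    have := max_sub_zero_sq_sub_max_sub_zero_sq_le (h0 t) (h0 (t - 1)) (h0 (t - 2))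
    simp only [hΨ_def, sub_sub, one_add_one_eq_two]
    linarith
  have hexpand : ∫ t, (φ t * φ t - 2 * (φ t * φ (t - 1)) + 2 * (φ t * φ (t - 2))) =
      (∫ t, φ t * φ t) - 2 * (∫ t, φ t * φ (t - 1)) + 2 * ∫ t, φ t * φ (t - 2) := by
    rw [integral_add hsub ((hint 2).const_mul 2), integral_sub hsq ((hint 1).const_mul 2),
      integral_const_mul, integral_const_mul]
  linarith

theorem integral_mul_comp_add (φ : ℝ → ℝ) (c : ℝ) :
    ∫ t, φ t * φ (t + c) = ∫ t, φ t * φ (t - c) := by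
  rw [← integral_sub_right_eq_self _ c]
  simp only [sub_add_cancel, mul_comm]

theorem W_isStable (f : ℝ → ℝ) (hf_cont : Continuous f) (hf_pos : ∀ x, 0 ≤ f x)
    (hf_supp : Function.support f ⊆ Set.Ioo (-(1/2) : ℝ) (1/2))
    (W : ℝ → ℝ)
    (hW : W = fun x => ∑ᶠ n : ℤ, V n * ∫ y : ℝ, f (n - x + y) * f y) :
    ∀ ρ : Measure ℝ, IsFiniteMeasure ρ →
      0 ≤ ∫ x : ℝ, (∫ y : ℝ, W (x - y) ∂ρ) ∂ρ := by
  intro ρ _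
  have hfc : HasCompactSupport f :=
    .of_support_subset_isCompact isCompact_Icc (hf_supp.trans Set.Ioo_subset_Icc_self)
  set φ : ℝ → ℝ := fun t => ∫ x, f (t - x) ∂ρ
  have hW_sum (u : ℝ) : W u = ∑ n ∈ {-2, -1, 0, 1, 2}, V n * autocorrelation f (n - u) := by
    rw [hW]
    exact finsum_eq_sum_of_support_subset _ fun n hn =>
      by_contra fun h => hn (by simp [V_eq_zero_of_notMem h])
  calc 0 ≤ (∫ t, φ t * φ t) - 2 * (∫ t, φ t * φ (t - 1)) + 2 * ∫ t, φ t * φ (t - 2) := by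
        linarith [two_mul_integral_mul_comp_sub_one_le
          (fun t => integral_nonneg fun x => hf_pos (t - x))
          (memLp_two_integral_comp_sub ρ hf_cont hfc)]
    _ = ∑ n ∈ {-2, -1, 0, 1, 2}, V n * ∫ t, φ t * φ (t - n) := by
        rw [sum_V_mul]
        push_cast [sub_neg_eq_add, integral_mul_comp_add, sub_zero]
        ring
    _ = ∫ x, ∫ y, W (x - y) ∂ρ ∂ρ := by
        simp only [hW_sum]
        exact (integral_integral_sum_autocorrelation ρ ρ hf_cont hfc _ _ _).symm
end

section
/- If f is not identically zero, then W is not the sum of a nonnegative function and a real continuous positive definite function: there do not exist h, g : ℝ → ℝ such that h x ≥ 0 for all x, g is continuous and positive definite, and W = h + g. -/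
open Finset
open scoped ComplexOrder

/-!
Let `A` be the autocorrelation of `f`. It vanishes for `|t| ≥ 1` and `A 0 = ∫ f² > 0`, so on the
integers `W m = V m * A 0`. If `W = h + g` with `h ≥ 0` and `g` positive definite, then `g ≤ W`,
and the quadratic form of `g` at `δ₀ + δ₁` satisfies `0 ≤ 2 g 0 + g 1 + g (-1) ≤ 0`: this vector is
null, hence orthogonal to every `δₜ + δₜ₊₁`, i.e. `S t = g t + g (-t)` is `1`-antiperiodic.
Then `S 4 = S 0 = 2 g 0 = 2 A 0 > 0`, whereas `S 4 ≤ W 4 + W (-4) = 0`.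
-/

namespace IsPosDef

variable {G : Type*} [AddCommGroup G] {g : G → ℝ}

theorem sum_real_nonneg (hg : IsPosDef g) {N : ℕ} (x : Fin N → G) (c : Fin N → ℝ) :
    0 ≤ ∑ i, ∑ j, c i * c j * g (x i - x j) := by
  have := hg N x (fun i => c i)
  simp only [Complex.conj_ofReal] at this
  exact_mod_cast this

theorem two_mul_apply_zero_add_apply_add_apply_neg_nonneg (hg : IsPosDef g) (a : G) :
    0 ≤ 2 * g 0 + g a + g (-a) := by
  have := hg.sum_real_nonneg ![0, a] ![1, 1]
  simp only [Fin.sum_univ_two, Matrix.cons_val_zero, Matrix.cons_val_one, sub_self, sub_zero,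
    zero_sub, one_mul] at this
  linarith

-- The form at `s δ₀ + δₜ + δₜ₊ₐ` is a quadratic in `s` with no constant term, so its linear
-- coefficient, the pairing of `δ₀ + δₐ` with `δₜ + δₜ₊ₐ`, must vanish.
theorem antiperiodic_add_comp_neg (hg : IsPosDef g) {a : G}
    (ha : 2 * g 0 + g a + g (-a) = 0) : Function.Antiperiodic (fun t => g t + g (-t)) a := by
  intro t
  have hquad : ∀ s : ℝ,
      0 ≤ g 0 * (s * s) + (g t + g (-t) + (g (t + a) + g (-(t + a)))) * s + 0 := by
    intro s
    have := hg.sum_real_nonneg ![0, t, t + a] ![s, 1, 1]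
    simp only [Fin.sum_univ_three, Matrix.cons_val_zero, Matrix.cons_val_one,
      Matrix.cons_val_two, Matrix.head_cons, Matrix.tail_cons, sub_self, sub_zero, zero_sub,
      one_mul, mul_one, add_sub_cancel_left, sub_add_cancel_left] at this
    linarith
  have hdisc := discrim_le_zero hquad
  rw [discrim] at hdisc
  simp only
  nlinarith [sq_nonneg (g t + g (-t) + (g (t + a) + g (-(t + a))))]

end IsPosDef

noncomputable def autocorr (f : ℝ → ℝ) (t : ℝ) : ℝ := ∫ y, f (t + y) * f y

theorem autocorr_eq_zero_of_support_subset {f : ℝ → ℝ} {r t : ℝ}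
    (hf : Function.support f ⊆ Set.Ioo (-r) r) (ht : 2 * r ≤ |t|) : autocorr f t = 0 := by
  have hzero : (fun y => f (t + y) * f y) = 0 := by
    funext y
    by_contra hne
    obtain ⟨hty, hy⟩ := mul_ne_zero_iff.mp hne
    obtain ⟨h1, h2⟩ := hf hty
    obtain ⟨h3, h4⟩ := hf hy
    exact (abs_lt.mpr ⟨by linarith, by linarith⟩ : |t| < 2 * r).not_ge ht
  rw [autocorr, hzero]
  exact MeasureTheory.integral_zero ℝ ℝ

theorem autocorr_zero_pos {f : ℝ → ℝ} (hf : Continuous f) (hcs : HasCompactSupport f)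
    (hne : f ≠ 0) : 0 < autocorr f 0 := by
  obtain ⟨x, hx⟩ := Function.ne_iff.mp hne
  simp only [autocorr, zero_add]
  exact (hf.mul hf).integral_pos_of_hasCompactSupport_nonneg_nonzero (hcs.mul_left)
    (fun y => mul_self_nonneg (f y)) (mul_self_ne_zero.mpr hx)

theorem finsum_mul_apply_intCast_sub {a : ℤ → ℝ} {A : ℝ → ℝ}
    (hA : ∀ k : ℤ, k ≠ 0 → A k = 0) (m : ℤ) :
    ∑ᶠ n : ℤ, a n * A (n - m) = a m * A 0 := by
  rw [finsum_eq_single _ m fun n hn => by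
    rw [← Int.cast_sub, hA _ (sub_ne_zero.mpr hn), mul_zero], sub_self]

theorem W_not_decomposable_general (f : ℝ → ℝ) (hf_cont : Continuous f)
    (hf_supp : Function.support f ⊆ Set.Ioo (-(1/2) : ℝ) (1/2))
    (hf_ne : f ≠ 0)
    (W : ℝ → ℝ)
    (hW : W = fun x => ∑ᶠ n : ℤ, V n * ∫ y : ℝ, f (n - x + y) * f y) :
    ¬ ∃ h g : ℝ → ℝ, (∀ x, 0 ≤ h x) ∧ Continuous g ∧ IsPosDef g ∧ W = h + g := by
  rintro ⟨h, g, hh, -, hg, rfl⟩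
  have hcs : HasCompactSupport f := isCompact_Icc.of_isClosed_subset (isClosed_tsupport f)
    (closure_minimal (hf_supp.trans Set.Ioo_subset_Icc_self) isClosed_Icc)
  have hA0 : 0 < autocorr f 0 := autocorr_zero_pos hf_cont hcs hf_ne
  have hle : ∀ m : ℤ, g m ≤ V m * autocorr f 0 := by
    intro m
    have hWm : h m + g m = V m * autocorr f 0 := by
      rw [← finsum_mul_apply_intCast_sub (fun k hk => autocorr_eq_zero_of_support_subset hf_supp
        (by norm_num; exact_mod_cast Int.one_le_abs hk)) m]
      exact congrFun hW m
    linarith [hh m]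
  have h0 := hle 0
  have h1 := hle 1
  have hm1 := hle (-1)
  have h4 := hle 4
  have hm4 := hle (-4)
  norm_num [V] at h0 h1 hm1 h4 hm4
  have h01 := hg.two_mul_apply_zero_add_apply_add_apply_neg_nonneg 1
  have hanti := hg.antiperiodic_add_comp_neg (a := 1) (by linarith)
  have h4eq := (hanti.periodic_two_mul.nat_mul 2).eq
  norm_num at h4eq
  linarith

theorem W_not_decomposable (f : ℝ → ℝ) (hf_cont : Continuous f)
    (hf_pos : ∀ x, 0 ≤ f x)
    (hf_supp : Function.support f ⊆ Set.Ioo (-(1/2) : ℝ) (1/2))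
    (hf_ne : f ≠ 0)
    (W : ℝ → ℝ)
    (hW : W = fun x => ∑ᶠ n : ℤ, V n * ∫ y : ℝ, f (n - x + y) * f y) :
    ¬ ∃ h g : ℝ → ℝ, (∀ x, 0 ≤ h x) ∧ Continuous g ∧ IsPosDef g ∧ W = h + g :=
  W_not_decomposable_general f hf_cont hf_supp hf_ne W hW
end

section
/- Let ρ : ZMod 5 → ℝ satisfy ρ m ≥ 0 for all m, and define the correlation measure μ : ZMod 5 → ℝ by μ n = ∑_{m ∈ ZMod 5} ρ m * ρ (m + n). Then for every k ∈ ZMod 5 with k ≠ 0, μ k ≤ (∑_{n ∈ ZMod 5} μ n)/4 = (∑_{m ∈ ZMod 5} ρ m)²/4. -/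
/-!
Summing the correlation over all shifts gives `(∑ ρ)²`. For `k ≠ 0`, multiplication by `k` permutes
`ZMod 5`, so `μ k = ∑ j, a j * a (j + 1)` with `a j = ρ (k * j)`: the edge sum of a weighted
5-cycle. Since the 5-cycle is triangle-free, such a sum is at most `(∑ a)² / 4`.
-/

theorem sum_sum_mul_add_eq_sq {G R : Type*} [AddGroup G] [Fintype G] [Semiring R]
    (ρ : G → R) : ∑ n, ∑ m, ρ m * ρ (m + n) = (∑ m, ρ m) ^ 2 := by
  rw [Finset.sum_comm, sq, Finset.sum_mul_sum]
  refine Finset.sum_congr rfl fun m _ => ?_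
  exact Fintype.sum_equiv (Equiv.addLeft m) _ _ fun _ => rfl

theorem sum_mul_add_eq_sum_mul_left_mul {F R : Type*} [DivisionRing F] [Fintype F]
    [AddCommMonoid R] [Mul R] (ρ : F → R) {k : F} (hk : k ≠ 0) :
    ∑ m, ρ m * ρ (m + k) = ∑ j, ρ (k * j) * ρ (k * (j + 1)) := by
  refine (Fintype.sum_equiv (Equiv.mulLeft₀ k hk) _ _ fun j => ?_).symm
  simp [mul_add]

theorem five_cycle_le_sq_sum_div_four {a b c d e : ℝ} (ha : 0 ≤ a) (hb : 0 ≤ b) (hc : 0 ≤ c)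
    (hd : 0 ≤ d) (he : 0 ≤ e) :
    a * b + b * c + c * d + d * e + e * a ≤ (a + b + c + d + e) ^ 2 / 4 := by
  nlinarith [sq_nonneg (a - b + c - d + e), sq_nonneg (b - c + d - e + a),
    sq_nonneg (c - d + e - a + b), sq_nonneg (d - e + a - b + c), sq_nonneg (e - a + b - c + d),
    mul_nonneg ha hc, mul_nonneg hb hd, mul_nonneg hc he, mul_nonneg hd ha, mul_nonneg he hb]

theorem sum_mul_add_one_le_sq_sum_div_four {f : ZMod 5 → ℝ} (hf : ∀ j, 0 ≤ f j) :
    ∑ j, f j * f (j + 1) ≤ (∑ j, f j) ^ 2 / 4 := by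
  have hsum (g : ZMod 5 → ℝ) : ∑ j, g j = g 0 + g 1 + g 2 + g 3 + g 4 := Fin.sum_univ_five g
  rw [hsum, hsum]
  exact five_cycle_le_sq_sum_div_four (hf 0) (hf 1) (hf 2) (hf 3) (hf 4)

theorem correlation_measure_bound (ρ : ZMod 5 → ℝ) (hρ : ∀ m, 0 ≤ ρ m)
    (μ : ZMod 5 → ℝ) (hμ : μ = fun n => ∑ m : ZMod 5, ρ m * ρ (m + n)) :
    (∑ n : ZMod 5, μ n) / 4 = (∑ m : ZMod 5, ρ m) ^ 2 / 4 ∧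
    ∀ k : ZMod 5, k ≠ 0 → μ k ≤ (∑ n : ZMod 5, μ n) / 4 := by
  have : Fact (Nat.Prime 5) := ⟨by norm_num⟩
  subst hμ
  rw [sum_sum_mul_add_eq_sq]
  refine ⟨rfl, fun k hk => ?_⟩
  calc ∑ m, ρ m * ρ (m + k)
      = ∑ j, ρ (k * j) * ρ (k * (j + 1)) := sum_mul_add_eq_sum_mul_left_mul ρ hk
    _ ≤ (∑ j, ρ (k * j)) ^ 2 / 4 := sum_mul_add_one_le_sq_sum_div_four fun j => hρ (k * j)
    _ = (∑ m, ρ m) ^ 2 / 4 := congrArg (· ^ 2 / 4) (Equiv.sum_comp (Equiv.mulLeft₀ k hk) ρ)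
end

section
/- The function V₅ is stable on ℤ/5ℤ: for every ρ : ZMod 5 → ℝ with ρ n ≥ 0 for all n, the double sum ∑_{m,n ∈ ZMod 5} ρ m * V₅ (m - n) * ρ n is ≥ 0. -/
/-!
Since `V₅ = 1 - 2 • 𝟙_{±1}`, the quadratic form equals `S ^ 2 - 4 C` with `S = ∑ ρ i` and
`C = ∑ ρ i * ρ (i + 1)`. After a rotation `ρ 0` is the largest weight; then `ρ 3 * ρ 4 ≤ ρ 0 * ρ 3`
gives `C ≤ (ρ 0 + ρ 2) * (ρ 1 + ρ 3 + ρ 4)`, which is at most `S ^ 2 / 4` by AM–GM.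
-/

open Finset

/-- The potential `V₅` on `ZMod 5`: `V₅ 0 = V₅ 2 = V₅ 3 = 1`, `V₅ 1 = V₅ 4 = -1`. -/
def V₅ : ZMod 5 → ℝ := fun n => if n = 1 ∨ n = 4 then -1 else 1

lemma ZMod.sum_univ_five {M : Type*} [AddCommMonoid M] (f : ZMod 5 → M) :
    ∑ i, f i = f 0 + f 1 + f 2 + f 3 + f 4 :=
  Fin.sum_univ_five f

lemma ZMod.sum_mul_add_one_univ_five {R : Type*} [CommSemiring R] (x : ZMod 5 → R) :
    ∑ i, x i * x (i + 1) = x 0 * x 1 + x 1 * x 2 + x 2 * x 3 + x 3 * x 4 + x 4 * x 0 :=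
  Fin.sum_univ_five _

lemma sum_sum_mul_V₅_mul (ρ : ZMod 5 → ℝ) :
    ∑ m, ∑ n, ρ m * V₅ (m - n) * ρ n = (∑ i, ρ i) ^ 2 - 4 * ∑ i, ρ i * ρ (i + 1) := by
  rw [ZMod.sum_mul_add_one_univ_five]
  simp +decide only [ZMod.sum_univ_five, V₅]
  norm_num
  ring

section CyclicSum

variable {R : Type*} [CommRing R] [LinearOrder R] [IsStrictOrderedRing R]

lemma four_mul_sum_mul_add_one_le_sq_sum_of_le_apply_zero (x : ZMod 5 → R)
    (hx : ∀ i, 0 ≤ x i) (hmax : ∀ i, x i ≤ x 0) :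
    4 * ∑ i, x i * x (i + 1) ≤ (∑ i, x i) ^ 2 := by
  have hsplit : ∑ i, x i * x (i + 1) ≤ (x 0 + x 2) * (x 1 + x 3 + x 4) := by
    rw [ZMod.sum_mul_add_one_univ_five]
    nlinarith [mul_le_mul_of_nonneg_left (hmax 4) (hx 3), mul_nonneg (hx 2) (hx 4)]
  calc 4 * ∑ i, x i * x (i + 1) ≤ 4 * ((x 0 + x 2) * (x 1 + x 3 + x 4)) := by gcongr
    _ ≤ (x 0 + x 2 + (x 1 + x 3 + x 4)) ^ 2 := by rw [← mul_assoc]; exact four_mul_le_sq_add _ _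
    _ = (∑ i, x i) ^ 2 := by rw [ZMod.sum_univ_five]; ring

lemma four_mul_sum_mul_add_one_le_sq_sum (x : ZMod 5 → R) (hx : ∀ i, 0 ≤ x i) :
    4 * ∑ i, x i * x (i + 1) ≤ (∑ i, x i) ^ 2 := by
  obtain ⟨k, -, hk⟩ := exists_max_image univ x univ_nonempty
  have hshift (f : ZMod 5 → R) : ∑ i, f (i + k) = ∑ i, f i := Equiv.sum_comp (Equiv.addRight k) f
  have h := four_mul_sum_mul_add_one_le_sq_sum_of_le_apply_zero (fun i => x (i + k))
    (fun i => hx _) (fun i => by simpa using hk (i + k) (mem_univ _))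
  simp only [add_right_comm _ (1 : ZMod 5) k] at h
  rwa [hshift x, hshift fun i => x i * x (i + 1)] at h

end CyclicSum

theorem V₅_isStable :
    ∀ ρ : ZMod 5 → ℝ, (∀ n, 0 ≤ ρ n) →
      0 ≤ ∑ m : ZMod 5, ∑ n : ZMod 5, ρ m * V₅ (m - n) * ρ n := by
  intro ρ hρ
  rw [sum_sum_mul_V₅_mul, sub_nonneg]
  exact four_mul_sum_mul_add_one_le_sq_sum ρ hρ
end
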